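/- Let m, n ≥ 2 be integers with m dividing n, let g₀ ≥ 1 and r ≥ 0, and for each i = 1, …, r, let n_{i1} be a positive divisor of m and n_{i2} a positive divisor of n, set n_i := lcm(n_{i1}, n_{i2}), and let c_{i1}, c_{i2} be integers with gcd(c_{i1}, n_{i1}) = 1 and gcd(c_{i2}, n_{i2}) = 1. Define v_i := ((m/n_{i1})·c_{i1}, (n/n_{i2})·c_{i2}) ∈ ℤ/mℤ × ℤ/nℤ, and assume Σ_{i=1}^r (m/n_{i1})·c_{i1} ≡ 0 (mod m) and Σ_{i=1}^r (n/n_{i2})·c_{i2} ≡ 0 (mod n). Let Γ be the group with presentation ⟨α₁, β₁, …, α_{g₀}, β_{g₀}, ξ₁, …, ξ_r | ξ₁^{n₁} = ⋯ = ξ_r^{n_r} = 1, ξ₁⋯ξ_r·[α₁,β₁]⋯[α_{g₀},β_{g₀}] = 1⟩. Then there exists a surjective group homomorphism φ : Γ → ℤ/mℤ × ℤ/nℤ such that φ(ξ_i) = v_i and the order of φ(ξ_i) equals n_i, for each i = 1, …, r. -/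

import Mathlib

/-- The generators of the orbifold group of signature `(g₀; n₁, …, n_r)`:
`Sum.inl (Sum.inl j)` is the hyperbolic generator `α_j`, `Sum.inl (Sum.inr j)` is `β_j`,
and `Sum.inr i` is the elliptic generator `ξ_i`. -/
abbrev OrbifoldGen (g₀ r : ℕ) : Type := (Fin g₀ ⊕ Fin g₀) ⊕ Fin r

open scoped commutatorElement

/-- The "long relator" `ξ₁⋯ξ_r · [α₁,β₁]⋯[α_{g₀},β_{g₀}]` in the free group on the
generators of the orbifold group of signature `(g₀; n₁, …, n_r)`. -/
def longRelator (g₀ r : ℕ) : FreeGroup (OrbifoldGen g₀ r) :=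
  (((List.finRange r).map fun i => FreeGroup.of (Sum.inr i : OrbifoldGen g₀ r)).prod) *
  (((List.finRange g₀).map fun j =>
      ⁅FreeGroup.of (Sum.inl (Sum.inl j) : OrbifoldGen g₀ r),
       FreeGroup.of (Sum.inl (Sum.inr j) : OrbifoldGen g₀ r)⁆).prod)

/-- The relators `ξ₁^{n₁}, …, ξ_r^{n_r}` and `ξ₁⋯ξ_r·∏_j [α_j,β_j]` of the orbifold group
of signature `(g₀; n₁, …, n_r)`. -/
def orbifoldRelators (g₀ r : ℕ) (nn : Fin r → ℕ) : Set (FreeGroup (OrbifoldGen g₀ r)) :=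
  {w | ∃ i, w = FreeGroup.of (Sum.inr i : OrbifoldGen g₀ r) ^ nn i} ∪ {longRelator g₀ r}

/-! Into an abelian group the commutators of the long relator vanish, so an assignment of the
generators extends to the orbifold group exactly when each `ξ_i` goes to an element of order
dividing `n_i` and the images of the `ξ_i` multiply to `1`. Send `ξ_i ↦ v_i`: in `ℤ/mℤ` the element
`(m/d)·c` has order `d` when `gcd(c, d) = 1`, so `v_i` has order `lcm(n_{i1}, n_{i2}) = n_i`, and
the sum condition is the hypothesis. Sending `α₁, β₁` to `(1, 0), (0, 1)` makes the map onto. -/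

open Multiplicative

theorem addOrderOf_zsmul_of_gcd_eq_one {G : Type*} [AddGroup G] {x : G} {c : ℤ}
    (hc : Int.gcd c (addOrderOf x) = 1) : addOrderOf (c • x) = addOrderOf x := by
  have hco : IsCoprime (addOrderOf x : ℤ) c := by
    rw [Int.isCoprime_iff_gcd_eq_one, Int.gcd_comm, hc]
  refine addOrderOf_eq_addOrderOf_iff.mpr fun k => ?_
  rw [← natCast_zsmul, smul_smul, ← addOrderOf_dvd_iff_zsmul_eq_zero, ← natCast_zsmul,
    ← addOrderOf_dvd_iff_zsmul_eq_zero]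
  exact ⟨hco.dvd_of_dvd_mul_right, fun h => dvd_mul_of_dvd_left h c⟩

namespace ZMod

theorem addOrderOf_natCast_div {m d : ℕ} (hm : m ≠ 0) (hd : d ∣ m) :
    addOrderOf ((m / d : ℕ) : ZMod m) = d := by
  rw [addOrderOf_coe _ hm, Nat.gcd_eq_right (Nat.div_dvd_of_dvd hd), Nat.div_div_self hd hm]

theorem addOrderOf_natCast_div_mul_intCast {m d : ℕ} (hm : m ≠ 0) (hd : d ∣ m) {c : ℤ}
    (hc : Int.gcd c d = 1) : addOrderOf (((m / d : ℕ) : ZMod m) * c) = d := by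
  have hx := addOrderOf_natCast_div hm hd
  rw [mul_comm, ← zsmul_eq_mul, addOrderOf_zsmul_of_gcd_eq_one (by rwa [hx]), hx]

end ZMod

theorem MonoidHom.surjective_of_ofAdd_mem_range {G : Type*} [Group G] {m n : ℕ}
    (φ : G →* Multiplicative (ZMod m × ZMod n))
    (h₁ : ofAdd ((1, 0) : ZMod m × ZMod n) ∈ φ.range)
    (h₂ : ofAdd ((0, 1) : ZMod m × ZMod n) ∈ φ.range) : Function.Surjective φ := by
  rw [← MonoidHom.range_eq_top, eq_top_iff]
  intro y _
  have hy : y = ofAdd ((1, 0) : ZMod m × ZMod n) ^ ((toAdd y).1.cast : ℤ) *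
      ofAdd ((0, 1) : ZMod m × ZMod n) ^ ((toAdd y).2.cast : ℤ) := by
    apply toAdd.injective
    ext <;> simp
  exact hy ▸ mul_mem (zpow_mem h₁ _) (zpow_mem h₂ _)

section OrbifoldGroup

variable {G : Type*} [CommGroup G] {g₀ r : ℕ}

theorem lift_longRelator (f : OrbifoldGen g₀ r → G) :
    FreeGroup.lift f (longRelator g₀ r) = ∏ i, f (Sum.inr i) := by
  have hcomm : ∀ a b : G, ⁅a, b⁆ = 1 := fun a b =>
    commutatorElement_eq_one_iff_mul_comm.mpr (mul_comm a b)
  simp [longRelator, map_list_prod, List.map_map, Fin.prod_univ_def, Function.comp_def,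
    map_commutatorElement, hcomm]

theorem lift_eq_one_of_mem_orbifoldRelators {nn : Fin r → ℕ} {f : OrbifoldGen g₀ r → G}
    (hpow : ∀ i, f (Sum.inr i) ^ nn i = 1) (hprod : ∏ i, f (Sum.inr i) = 1) :
    ∀ w ∈ orbifoldRelators g₀ r nn, FreeGroup.lift f w = 1 := by
  rintro w (⟨i, rfl⟩ | rfl)
  · rw [map_pow, FreeGroup.lift_apply_of, hpow]
  · rw [lift_longRelator, hprod]

end OrbifoldGroup

theorem exists_surjective_hom_of_abelian_data_positive_genus_general
    (m n : ℕ) (hm : 2 ≤ m) (hn : 2 ≤ n) (g₀ r : ℕ) (hg₀ : 1 ≤ g₀)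
    (n1 n2 : Fin r → ℕ)
    (hn1 : ∀ i, n1 i ∣ m) (hn2 : ∀ i, n2 i ∣ n)
    (nn : Fin r → ℕ) (hnn : ∀ i, nn i = Nat.lcm (n1 i) (n2 i))
    (c1 c2 : Fin r → ℤ)
    (hc1 : ∀ i, Int.gcd (c1 i) (n1 i) = 1) (hc2 : ∀ i, Int.gcd (c2 i) (n2 i) = 1)
    (v : Fin r → ZMod m × ZMod n)
    (hv : ∀ i, v i = (((m / n1 i : ℕ) : ZMod m) * (c1 i : ZMod m),
                      ((n / n2 i : ℕ) : ZMod n) * (c2 i : ZMod n)))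
    (ha1 : ∑ i, ((m / n1 i : ℕ) : ZMod m) * (c1 i : ZMod m) = 0)
    (ha2 : ∑ i, ((n / n2 i : ℕ) : ZMod n) * (c2 i : ZMod n) = 0) :
    ∃ φ : PresentedGroup (orbifoldRelators g₀ r nn) →* Multiplicative (ZMod m × ZMod n),
      Function.Surjective φ ∧
      ∀ i, φ (PresentedGroup.of (Sum.inr i : OrbifoldGen g₀ r)) = Multiplicative.ofAdd (v i) ∧
        orderOf (φ (PresentedGroup.of (Sum.inr i : OrbifoldGen g₀ r))) = nn i := by
  have hord : ∀ i, addOrderOf (v i) = nn i := fun i => by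
    rw [hv i, Prod.addOrderOf, ZMod.addOrderOf_natCast_div_mul_intCast (by omega) (hn1 i) (hc1 i),
      ZMod.addOrderOf_natCast_div_mul_intCast (by omega) (hn2 i) (hc2 i), hnn i]
  have hsum : ∑ i, v i = 0 := by
    ext <;> simp [hv, Prod.fst_sum, Prod.snd_sum, ha1, ha2]
  let f : OrbifoldGen g₀ r → Multiplicative (ZMod m × ZMod n) :=
    Sum.elim (Sum.elim (fun _ => ofAdd (1, 0)) (fun _ => ofAdd (0, 1))) (ofAdd ∘ v)
  have hrel : ∀ w ∈ orbifoldRelators g₀ r nn, FreeGroup.lift f w = 1 :=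
    lift_eq_one_of_mem_orbifoldRelators
      (fun i => by simp [f, ← orderOf_dvd_iff_pow_eq_one, hord])
      (by simp [f, ← ofAdd_sum, hsum])
  let φ := PresentedGroup.toGroup hrel
  refine ⟨φ, φ.surjective_of_ofAdd_mem_range ?_ ?_,
    fun i => ⟨by simp [φ, f], by simp [φ, f, hord]⟩⟩
  · exact ⟨PresentedGroup.of (Sum.inl (Sum.inl ⟨0, hg₀⟩)), by simp [φ, f]⟩
  · exact ⟨PresentedGroup.of (Sum.inl (Sum.inr ⟨0, hg₀⟩)), by simp [φ, f]⟩

/-- **Proposition 4.3, forward direction, positive-genus case.**  Given `2 ≤ m ∣ n`,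
`g₀ ≥ 1`, divisors `n_{i1} ∣ m`, `n_{i2} ∣ n`, `n_i = lcm(n_{i1}, n_{i2})`, integers
`c_{i1}, c_{i2}` coprime to `n_{i1}, n_{i2}`, with
`v_i = ((m/n_{i1})·c_{i1}, (n/n_{i2})·c_{i2}) ∈ ℤ/mℤ × ℤ/nℤ` and both coordinate sums
vanishing, there is a surjective homomorphism `φ` from the presented group
`⟨α_j, β_j, ξ_i ∣ ξ_i^{n_i}, ξ₁⋯ξ_r·∏_j[α_j,β_j]⟩` onto `ℤ/mℤ ⊕ ℤ/nℤ` with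
`φ(ξ_i) = v_i` of order `n_i`. -/
theorem exists_surjective_hom_of_abelian_data_positive_genus
    (m n : ℕ) (hm : 2 ≤ m) (hn : 2 ≤ n) (hmn : m ∣ n) (g₀ r : ℕ) (hg₀ : 1 ≤ g₀)
    (n1 n2 : Fin r → ℕ) (hn1pos : ∀ i, 0 < n1 i) (hn2pos : ∀ i, 0 < n2 i)
    (hn1 : ∀ i, n1 i ∣ m) (hn2 : ∀ i, n2 i ∣ n)
    (nn : Fin r → ℕ) (hnn : ∀ i, nn i = Nat.lcm (n1 i) (n2 i))
    (c1 c2 : Fin r → ℤ)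
    (hc1 : ∀ i, Int.gcd (c1 i) (n1 i) = 1) (hc2 : ∀ i, Int.gcd (c2 i) (n2 i) = 1)
    (v : Fin r → ZMod m × ZMod n)
    (hv : ∀ i, v i = (((m / n1 i : ℕ) : ZMod m) * (c1 i : ZMod m),
                      ((n / n2 i : ℕ) : ZMod n) * (c2 i : ZMod n)))
    (ha1 : ∑ i, ((m / n1 i : ℕ) : ZMod m) * (c1 i : ZMod m) = 0)
    (ha2 : ∑ i, ((n / n2 i : ℕ) : ZMod n) * (c2 i : ZMod n) = 0) :
    ∃ φ : PresentedGroup (orbifoldRelators g₀ r nn) →* Multiplicative (ZMod m × ZMod n),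
      Function.Surjective φ ∧
      ∀ i, φ (PresentedGroup.of (Sum.inr i : OrbifoldGen g₀ r)) = Multiplicative.ofAdd (v i) ∧
        orderOf (φ (PresentedGroup.of (Sum.inr i : OrbifoldGen g₀ r))) = nn i :=
  exists_surjective_hom_of_abelian_data_positive_genus_general m n hm hn g₀ r hg₀ n1 n2 hn1 hn2 nn
    hnn c1 c2 hc1 hc2 v hv ha1 ha2
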